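/- arXiv:1203.4008 — 2 statements merged into one kernel-verified Lean document; each statement's English description precedes it below -/
import Mathlib

section
/- For every erasure probability ε with 0 < ε < 1 and all integers K, T with 2 ≤ K and K+1 ≤ T, the single-receiver decoding probability is log-concave in the block size: P̂(K,T)² ≥ P̂(K−1,T) · P̂(K+1,T). -/
/-- Single-receiver decoding probability: probability that one receiver obtains
`K` successful receptions within `T` slots over a binary erasure channel with
erasure probability `ε`.  (The sum over `Finset.Icc K T` is empty, i.e. `0`,
when `T < K`.) -/
noncomputable def Phat (ε : ℝ) (K T : ℕ) : ℝ :=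
  ∑ τ ∈ Finset.Icc K T, ((τ - 1).choose (K - 1) : ℝ) * ε ^ (τ - K) * (1 - ε) ^ K

/-!
Counting the slots up to the `K`-th success, `P̂(K,T)` is the probability that `T` Bernoulli
trials with success probability `1 - ε` contain at least `K` successes, i.e. a binomial tail
`∑_{j ≥ K} b_j`. The binomial weights satisfy `b_i b_{j+1} ≤ b_{i+1} b_j` for `i ≤ j`, and
tail sums of a nonnegative sequence with this property are log-concave: with `S` the tail from
`K`, the defect `S² - (b_{K-1} + S)(S - b_K)` equals `b_{K-1} b_K - (b_{K-1} - b_K) S`, and the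
inequalities for `i = K - 1` bound `(b_{K-1} - b_K) S` by a telescoping sum.
-/

open Finset

theorem Finset.sum_Icc_eq_add_sum_Icc_add_one {M : Type*} [AddCommMonoid M] (f : ℕ → M)
    {a b : ℕ} (h : a ≤ b) : ∑ i ∈ Icc a b, f i = f a + ∑ i ∈ Icc (a + 1) b, f i := by
  rw [Icc_add_one_left_eq_Ioc, add_sum_Ioc_eq_sum_Icc h]

theorem Nat.choose_mul_choose_succ_le {n i j : ℕ} (hij : i ≤ j) :
    n.choose i * n.choose (j + 1) ≤ n.choose (i + 1) * n.choose j := by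
  refine Nat.le_of_mul_le_mul_right (c := (i + 1) * (j + 1)) ?_ (by positivity)
  have hratio : (i + 1) * (n - j) ≤ (n - i) * (j + 1) := by
    rw [mul_comm (i + 1)]
    exact Nat.mul_le_mul (by omega) (by omega)
  calc n.choose i * n.choose (j + 1) * ((i + 1) * (j + 1))
      = n.choose i * (i + 1) * (n.choose (j + 1) * (j + 1)) := by ring
    _ = n.choose i * n.choose j * ((i + 1) * (n - j)) := by rw [Nat.choose_succ_right_eq]; ring
    _ ≤ n.choose i * n.choose j * ((n - i) * (j + 1)) := Nat.mul_le_mul_left _ hratio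
    _ = n.choose i * (n - i) * n.choose j * (j + 1) := by ring
    _ = n.choose (i + 1) * n.choose j * ((i + 1) * (j + 1)) := by
        rw [← Nat.choose_succ_right_eq]; ring

theorem sum_Icc_mul_sum_Icc_add_two_le_sq {a : ℕ → ℝ} {k : ℕ} (ha : ∀ j, 0 ≤ a j)
    (hlc : ∀ j, k < j → a k * a (j + 1) ≤ a (k + 1) * a j) (n : ℕ) :
    (∑ j ∈ Icc k n, a j) * ∑ j ∈ Icc (k + 2) n, a j ≤ (∑ j ∈ Icc (k + 1) n, a j) ^ 2 := by
  rcases lt_or_ge n (k + 1) with hnk | hkn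
  · simp [Icc_eq_empty_of_lt hnk, Icc_eq_empty_of_lt (hnk.trans (Nat.lt_succ_self _))]
  have hk := sum_Icc_eq_add_sum_Icc_add_one a (Nat.le_of_succ_le hkn)
  have hk2 : ∑ j ∈ Icc (k + 2) n, a j = ∑ j ∈ Icc (k + 1) n, a j - a (k + 1) := by
    rw [sum_Icc_eq_add_sum_Icc_add_one a hkn, add_sub_cancel_left]
  set S := ∑ j ∈ Icc (k + 1) n, a j
  have key : (a k - a (k + 1)) * S ≤ a k * a (k + 1) :=
    calc (a k - a (k + 1)) * S
        = ∑ j ∈ Icc (k + 1) n, (a k - a (k + 1)) * a j := mul_sum _ _ _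
      _ ≤ ∑ j ∈ Icc (k + 1) n, -(a k * (a (j + 1) - a j)) := by
          refine sum_le_sum fun j hj => ?_
          linarith [hlc j (mem_Icc.1 hj).1]
      _ = a k * (a (k + 1) - a (n + 1)) := by
          rw [sum_neg_distrib, ← mul_sum, sum_Icc_sub hkn]
          ring
      _ ≤ a k * a (k + 1) := by nlinarith [ha k, ha (n + 1)]
  rw [hk, hk2]
  linear_combination key

noncomputable def binomialTerm (p : ℝ) (n j : ℕ) : ℝ :=
  n.choose j * p ^ j * (1 - p) ^ (n - j)

noncomputable def binomialTail (p : ℝ) (n k : ℕ) : ℝ :=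
  ∑ j ∈ Icc k n, binomialTerm p n j

section binomialTerm

variable {p : ℝ}

theorem binomialTerm_nonneg (hp0 : 0 ≤ p) (hp1 : p ≤ 1) (n j : ℕ) : 0 ≤ binomialTerm p n j := by
  unfold binomialTerm
  have : 0 ≤ 1 - p := by linarith
  positivity

theorem binomialTerm_eq_zero_of_lt (p : ℝ) {n j : ℕ} (h : n < j) : binomialTerm p n j = 0 := by
  simp [binomialTerm, Nat.choose_eq_zero_of_lt h]

theorem binomialTerm_succ_succ (p : ℝ) (n j : ℕ) :
    binomialTerm p (n + 1) (j + 1) =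
      p * binomialTerm p n j + (1 - p) * binomialTerm p n (j + 1) := by
  rcases lt_or_ge j n with hjn | hnj
  · obtain ⟨m, rfl⟩ : ∃ m, n = j + 1 + m := ⟨n - (j + 1), by omega⟩
    simp only [binomialTerm, Nat.choose_succ_succ', Nat.add_sub_cancel_left,
      show j + 1 + m + 1 - (j + 1) = m + 1 by omega, show j + 1 + m - j = m + 1 by omega]
    push_cast
    ring
  · rw [binomialTerm_eq_zero_of_lt p (by omega : n < j + 1)]
    simp only [binomialTerm, Nat.choose_succ_succ',
      Nat.choose_eq_zero_of_lt (by omega : n < j + 1), show n + 1 - (j + 1) = n - j by omega]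
    push_cast
    ring

theorem binomialTerm_mul_binomialTerm_succ_le (hp0 : 0 ≤ p) (hp1 : p ≤ 1) {n i j : ℕ}
    (hij : i ≤ j) :
    binomialTerm p n i * binomialTerm p n (j + 1) ≤
      binomialTerm p n (i + 1) * binomialTerm p n j := by
  rcases lt_or_ge n (j + 1) with hnj | hjn
  · rw [binomialTerm_eq_zero_of_lt p hnj, mul_zero]
    exact mul_nonneg (binomialTerm_nonneg hp0 hp1 _ _) (binomialTerm_nonneg hp0 hp1 _ _)
  obtain ⟨a, ha⟩ : ∃ a, n - i = a + 1 := ⟨n - (i + 1), by omega⟩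
  obtain ⟨b, hb⟩ : ∃ b, n - j = b + 1 := ⟨n - (j + 1), by omega⟩
  have hchoose : ((n.choose i * n.choose (j + 1) : ℕ) : ℝ) ≤
      (n.choose (i + 1) * n.choose j : ℕ) := Nat.cast_le.2 (Nat.choose_mul_choose_succ_le hij)
  have hq : 0 ≤ 1 - p := by linarith
  simp only [binomialTerm, ha, hb, show n - (i + 1) = a by omega, show n - (j + 1) = b by omega]
  push_cast at hchoose
  calc _ = (n.choose i * n.choose (j + 1) : ℝ) * (p ^ (i + j + 1) * (1 - p) ^ (a + b + 1)) := by
          ring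
    _ ≤ (n.choose (i + 1) * n.choose j : ℝ) * (p ^ (i + j + 1) * (1 - p) ^ (a + b + 1)) := by
          gcongr
    _ = _ := by ring

theorem binomialTail_succ_succ (p : ℝ) (n k : ℕ) (hkn : k ≤ n) :
    binomialTail p (n + 1) (k + 1) = binomialTail p n (k + 1) + p * binomialTerm p n k := by
  have hshift : ∀ f : ℕ → ℝ, ∑ i ∈ Icc k n, f (i + 1) = ∑ j ∈ Icc (k + 1) (n + 1), f j := by
    intro f
    rw [← map_add_right_Icc k n 1, sum_map]
    rfl
  have hsplit : binomialTail p n k = binomialTerm p n k + binomialTail p n (k + 1) := by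
    rw [binomialTail, binomialTail, sum_Icc_eq_add_sum_Icc_add_one _ hkn]
  calc binomialTail p (n + 1) (k + 1)
      = ∑ i ∈ Icc k n, (p * binomialTerm p n i + (1 - p) * binomialTerm p n (i + 1)) := by
        rw [binomialTail, ← hshift]
        simp only [binomialTerm_succ_succ]
    _ = p * binomialTail p n k + (1 - p) * ∑ j ∈ Icc (k + 1) (n + 1), binomialTerm p n j := by
        rw [sum_add_distrib, ← mul_sum, ← mul_sum, hshift, binomialTail]
    _ = _ := by
        rw [sum_Icc_succ_top (by omega), binomialTerm_eq_zero_of_lt p (Nat.lt_succ_self n),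
          hsplit, ← binomialTail]
        ring

end binomialTerm

theorem Phat_eq_binomialTail (ε : ℝ) {K : ℕ} (hK : K ≠ 0) (T : ℕ) :
    Phat ε K T = binomialTail (1 - ε) T K := by
  obtain ⟨k, rfl⟩ : ∃ k, K = k + 1 := ⟨K - 1, by omega⟩
  induction T with
  | zero => simp [Phat, binomialTail]
  | succ n ih =>
    rcases le_or_gt k n with hkn | hnk
    · rw [Phat, sum_Icc_succ_top (by omega), ← Phat, ih, binomialTail_succ_succ _ _ _ hkn,
        binomialTerm, sub_sub_cancel]
      simp only [Nat.add_sub_cancel, Nat.add_sub_add_right]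
      ring
    · simp [Phat, binomialTail, Icc_eq_empty_of_lt (Nat.succ_lt_succ hnk)]

theorem phat_log_concave_general (ε : ℝ) (hε0 : 0 < ε) (hε1 : ε < 1) (K T : ℕ)
    (hK : 2 ≤ K) :
    Phat ε (K - 1) T * Phat ε (K + 1) T ≤ (Phat ε K T) ^ 2 := by
  obtain ⟨k, rfl⟩ : ∃ k, K = k + 2 := ⟨K - 2, by omega⟩
  rw [Phat_eq_binomialTail ε (by omega), Phat_eq_binomialTail ε (by omega),
    Phat_eq_binomialTail ε (by omega)]
  have hp0 : 0 ≤ 1 - ε := by linarith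
  have hp1 : 1 - ε ≤ 1 := by linarith
  exact sum_Icc_mul_sum_Icc_add_two_le_sq (binomialTerm_nonneg hp0 hp1 T)
    (fun j hj => binomialTerm_mul_binomialTerm_succ_le hp0 hp1 hj.le) T

/-- For `0 < ε < 1`, `2 ≤ K` and `K+1 ≤ T`, the single-receiver
decoding probability is log-concave in the block size:
`P̂(K,T)² ≥ P̂(K-1,T) · P̂(K+1,T)`. -/
theorem phat_log_concave (ε : ℝ) (hε0 : 0 < ε) (hε1 : ε < 1) (K T : ℕ)
    (hK : 2 ≤ K) (hKT : K + 1 ≤ T) :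
    Phat ε (K - 1) T * Phat ε (K + 1) T ≤ (Phat ε K T) ^ 2 :=
  phat_log_concave_general ε hε0 hε1 K T hK
end

section
/- For every erasure probability ε with 0 < ε < 1, every integer N ≥ 1, and every integer T ≥ 1, the greedy block size is monotone in the remaining time: K̂_T ≤ K̂_{T+1}. -/
/-- Probability that all `N` receivers (over i.i.d. erasure channels) decode a
network-coded block of `K` packets within `T` slots. -/
noncomputable def Pall (ε : ℝ) (N K T : ℕ) : ℝ := (Phat ε K T) ^ N

/-- Expected immediate reward: expected number of packets decoded by all `N`
receivers when a block of size `K` is transmitted with `T` slots remaining. -/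
noncomputable def Rew (ε : ℝ) (N T K : ℕ) : ℝ := (K : ℝ) * Pall ε N K T

/-- `Kh` is the greedy block size for horizon `T`: the least maximizer of the
expected immediate reward `K ↦ R_T(K)` over `K ∈ {1,…,T}`. -/
def IsGreedy (ε : ℝ) (N T Kh : ℕ) : Prop :=
  Kh ∈ Finset.Icc 1 T ∧ (∀ K ∈ Finset.Icc 1 T, Rew ε N T K ≤ Rew ε N T Kh) ∧
  (∀ K ∈ Finset.Icc 1 T, (∀ K' ∈ Finset.Icc 1 T, Rew ε N T K' ≤ Rew ε N T K) → Kh ≤ K)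

namespace Nat

theorem choose_succ_mul_choose_le {s t : ℕ} (hst : s ≤ t) (j : ℕ) :
    s.choose (j + 1) * t.choose j ≤ s.choose j * t.choose (j + 1) := by
  refine Nat.le_of_mul_le_mul_right ?_ j.succ_pos
  calc s.choose (j + 1) * t.choose j * (j + 1)
      = s.choose j * (s - j) * t.choose j := by rw [← choose_succ_right_eq]; ring
    _ ≤ s.choose j * (t - j) * t.choose j := by gcongr
    _ = s.choose j * t.choose (j + 1) * (j + 1) := by
      rw [mul_assoc, mul_comm (t - j), ← choose_succ_right_eq]; ring

theorem choose_mul_choose_le_of_le {s t i j : ℕ} (hst : s ≤ t) (hij : i ≤ j) :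
    s.choose j * t.choose i ≤ s.choose i * t.choose j := by
  induction j, hij using Nat.le_induction with
  | base => rfl
  | succ j hij ih =>
    rcases lt_or_ge t j with htj | hjt
    · simp [choose_eq_zero_of_lt (show s < j + 1 by omega)]
    refine Nat.le_of_mul_le_mul_right ?_ (choose_pos hjt)
    calc s.choose (j + 1) * t.choose i * t.choose j
        = s.choose (j + 1) * t.choose j * t.choose i := by ring
      _ ≤ s.choose j * t.choose (j + 1) * t.choose i :=
        Nat.mul_le_mul_right _ (choose_succ_mul_choose_le hst j)
      _ = s.choose j * t.choose i * t.choose (j + 1) := by ring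
      _ ≤ s.choose i * t.choose j * t.choose (j + 1) := Nat.mul_le_mul_right _ ih
      _ = s.choose i * t.choose (j + 1) * t.choose j := by ring

end Nat

noncomputable def negBinomProb (ε : ℝ) (K τ : ℕ) : ℝ :=
  ((τ - 1).choose (K - 1) : ℝ) * ε ^ (τ - K) * (1 - ε) ^ K

section

variable {ε : ℝ}

theorem negBinomProb_nonneg (h0 : 0 ≤ ε) (h1 : ε ≤ 1) (K τ : ℕ) : 0 ≤ negBinomProb ε K τ := by
  unfold negBinomProb
  have : 0 ≤ 1 - ε := by linarith
  positivity

theorem negBinomProb_self_pos (h1 : ε < 1) (K : ℕ) : 0 < negBinomProb ε K K := by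
  have : 0 < 1 - ε := by linarith
  simp only [negBinomProb, Nat.choose_self, Nat.sub_self, Nat.cast_one, pow_zero, one_mul]
  positivity

theorem negBinomProb_mul_le (h0 : 0 ≤ ε) (h1 : ε ≤ 1) {a b τ τ' : ℕ}
    (hab : a ≤ b) (hbτ : b ≤ τ) (hττ' : τ ≤ τ') :
    negBinomProb ε a τ' * negBinomProb ε b τ ≤ negBinomProb ε b τ' * negBinomProb ε a τ := by
  have hchoose : ((τ - 1).choose (b - 1) * (τ' - 1).choose (a - 1) : ℝ) ≤
      (τ - 1).choose (a - 1) * (τ' - 1).choose (b - 1) := by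
    exact_mod_cast Nat.choose_mul_choose_le_of_le (by omega) (by omega)
  have hexp : (τ' - a) + (τ - b) = (τ' - b) + (τ - a) := by omega
  have : 0 ≤ 1 - ε := by linarith
  calc negBinomProb ε a τ' * negBinomProb ε b τ
      = ((τ - 1).choose (b - 1) * (τ' - 1).choose (a - 1) : ℝ) *
          (ε ^ ((τ' - a) + (τ - b)) * (1 - ε) ^ (a + b)) := by
        simp only [negBinomProb, pow_add]; ring
    _ ≤ ((τ - 1).choose (a - 1) * (τ' - 1).choose (b - 1) : ℝ) *
          (ε ^ ((τ' - b) + (τ - a)) * (1 - ε) ^ (a + b)) := by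
        rw [hexp]; gcongr
    _ = negBinomProb ε b τ' * negBinomProb ε a τ := by
        simp only [negBinomProb, pow_add]; ring

theorem Phat_nonneg (h0 : 0 ≤ ε) (h1 : ε ≤ 1) (K T : ℕ) : 0 ≤ Phat ε K T :=
  Finset.sum_nonneg fun τ _ => negBinomProb_nonneg h0 h1 K τ

theorem Phat_pos (h0 : 0 ≤ ε) (h1 : ε < 1) {K T : ℕ} (hKT : K ≤ T) : 0 < Phat ε K T :=
  (negBinomProb_self_pos h1 K).trans_le <|
    Finset.single_le_sum (fun τ _ => negBinomProb_nonneg h0 h1.le K τ)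
      (Finset.mem_Icc.mpr ⟨le_rfl, hKT⟩)

theorem Phat_succ (ε : ℝ) {K T : ℕ} (hKT : K ≤ T + 1) :
    Phat ε K (T + 1) = Phat ε K T + negBinomProb ε K (T + 1) :=
  Finset.sum_Icc_succ_top hKT _

theorem Phat_succ_mul_le (h0 : 0 ≤ ε) (h1 : ε ≤ 1) {a b T : ℕ} (hab : a ≤ b) (hbT : b ≤ T) :
    Phat ε a (T + 1) * Phat ε b T ≤ Phat ε b (T + 1) * Phat ε a T := by
  have hstep : negBinomProb ε a (T + 1) * Phat ε b T ≤ negBinomProb ε b (T + 1) * Phat ε a T :=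
    calc negBinomProb ε a (T + 1) * Phat ε b T
        = ∑ τ ∈ Finset.Icc b T, negBinomProb ε a (T + 1) * negBinomProb ε b τ :=
          Finset.mul_sum _ _ _
      _ ≤ ∑ τ ∈ Finset.Icc b T, negBinomProb ε b (T + 1) * negBinomProb ε a τ :=
          Finset.sum_le_sum fun τ hτ => by
            have := Finset.mem_Icc.mp hτ
            exact negBinomProb_mul_le h0 h1 hab this.1 (by omega)
      _ ≤ ∑ τ ∈ Finset.Icc a T, negBinomProb ε b (T + 1) * negBinomProb ε a τ :=
          Finset.sum_le_sum_of_subset_of_nonneg (Finset.Icc_subset_Icc_left hab) fun τ _ _ =>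
            mul_nonneg (negBinomProb_nonneg h0 h1 _ _) (negBinomProb_nonneg h0 h1 _ _)
      _ = negBinomProb ε b (T + 1) * Phat ε a T := (Finset.mul_sum _ _ _).symm
  rw [Phat_succ ε (by omega : a ≤ T + 1), Phat_succ ε (by omega : b ≤ T + 1)]
  linarith

theorem Pall_pos (h0 : 0 ≤ ε) (h1 : ε < 1) (N : ℕ) {K T : ℕ} (hKT : K ≤ T) :
    0 < Pall ε N K T :=
  pow_pos (Phat_pos h0 h1 hKT) N

theorem Pall_succ_mul_le (h0 : 0 ≤ ε) (h1 : ε ≤ 1) (N : ℕ) {a b T : ℕ} (hab : a ≤ b)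
    (hbT : b ≤ T) : Pall ε N a (T + 1) * Pall ε N b T ≤ Pall ε N b (T + 1) * Pall ε N a T := by
  simp only [Pall, ← mul_pow]
  exact pow_le_pow_left₀ (mul_nonneg (Phat_nonneg h0 h1 _ _) (Phat_nonneg h0 h1 _ _))
    (Phat_succ_mul_le h0 h1 hab hbT) N

theorem Rew_succ_lt_of_lt (h0 : 0 ≤ ε) (h1 : ε < 1) (N : ℕ) {a b T : ℕ} (hab : a ≤ b)
    (hbT : b ≤ T) (hlt : Rew ε N T a < Rew ε N T b) :
    Rew ε N (T + 1) a < Rew ε N (T + 1) b := by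
  simp only [Rew] at hlt ⊢
  have hq : 0 ≤ Pall ε N b T := (Pall_pos h0 h1 N hbT).le
  have hq' : 0 < Pall ε N b (T + 1) := Pall_pos h0 h1 N (by omega)
  have hratio := Pall_succ_mul_le h0 h1.le N hab hbT
  by_contra! hge
  nlinarith [mul_le_mul_of_nonneg_right hge hq, mul_lt_mul_of_pos_right hlt hq',
    mul_le_mul_of_nonneg_left hratio (Nat.cast_nonneg a : (0 : ℝ) ≤ a)]

theorem IsGreedy.rew_lt_of_lt {N T Kh K : ℕ} (h : IsGreedy ε N T Kh) (hK : 1 ≤ K)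
    (hlt : K < Kh) : Rew ε N T K < Rew ε N T Kh := by
  obtain ⟨hKh, hmax, hleast⟩ := h
  have hKT : K ∈ Finset.Icc 1 T :=
    Finset.mem_Icc.mpr ⟨hK, hlt.le.trans (Finset.mem_Icc.mp hKh).2⟩
  by_contra! hge
  exact hlt.not_ge <| hleast K hKT fun K' hK' => (hmax K' hK').trans hge

end

theorem greedy_monotone_general (ε : ℝ) (hε0 : 0 < ε) (hε1 : ε < 1) (N : ℕ)
    (T : ℕ) (Kh Kh' : ℕ)
    (h1 : IsGreedy ε N T Kh) (h2 : IsGreedy ε N (T + 1) Kh') :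
    Kh ≤ Kh' := by
  by_contra! hlt
  have hKh := Finset.mem_Icc.mp h1.1
  have hKh' := Finset.mem_Icc.mp h2.1
  have hstrict := Rew_succ_lt_of_lt hε0.le hε1 N hlt.le hKh.2 (h1.rew_lt_of_lt hKh'.1 hlt)
  exact (h2.2.1 Kh (Finset.mem_Icc.mpr ⟨hKh.1, by omega⟩)).not_gt hstrict

/-- For `0 < ε < 1`, `N ≥ 1` and `T ≥ 1`, the greedy block size is
monotone in the remaining time: `K̂_T ≤ K̂_{T+1}`. -/
theorem greedy_monotone (ε : ℝ) (hε0 : 0 < ε) (hε1 : ε < 1) (N : ℕ) (hN : 1 ≤ N)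
    (T : ℕ) (hT : 1 ≤ T) (Kh Kh' : ℕ)
    (h1 : IsGreedy ε N T Kh) (h2 : IsGreedy ε N (T + 1) Kh') :
    Kh ≤ Kh' :=
  greedy_monotone_general ε hε0 hε1 N T Kh Kh' h1 h2
end
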